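/- arXiv:2307.09453 — 2 statements merged into one kernel-verified Lean document; each statement's English description precedes it below -/
import Mathlib

section
/- Let N ≥ 3 be odd and let (S,E) be the cycle of length N. Let Vbar = V/(F·e_S) and pi: V → Vbar the quotient map. Then pi restricts to a bijection from V_0 onto Vbar; in particular |V_0| = |V_1| = 2^{N−1}. -/
/-- The induced subgraph of `adj` on `I` is a path (type `A_m`, `m ≥ 1`):
there is an injective enumeration `f : Fin (m+1) → S` of `I` such that two
elements of `I` are adjacent iff they are consecutive in the enumeration. -/
def IsPathOn {S : Type} [DecidableEq S] (adj : S → S → Prop) (I : Finset S) : Prop :=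
  ∃ (m : ℕ) (f : Fin (m + 1) → S), Function.Injective f ∧
    I = Finset.image f Finset.univ ∧
    ∀ i j : Fin (m + 1), adj (f i) (f j) ↔ ((i : ℕ) + 1 = (j : ℕ) ∨ (j : ℕ) + 1 = (i : ℕ))

/-- The induced subgraph of `adj` on `I` is connected. -/
def ConnOn {S : Type} (adj : S → S → Prop) (I : Finset S) : Prop :=
  ∀ s ∈ I, ∀ t ∈ I, Relation.ReflTransGen (fun a b => a ∈ I ∧ b ∈ I ∧ adj a b) s t

/-- `I ∈ Cal_I^1`: the induced subgraph on `I` is a path and `|I|` is odd. -/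
def CalI1 {S : Type} [DecidableEq S] (adj : S → S → Prop) (I : Finset S) : Prop :=
  IsPathOn adj I ∧ Odd I.card

/-- `I ≺ I'`. -/
def Prec {S : Type} [DecidableEq S] (adj : S → S → Prop) (I I' : Finset S) : Prop :=
  I ⊂ I' ∧ ¬ ConnOn adj (I' \ I)

/-- `I ♠ I'`. -/
def Spade {S : Type} [DecidableEq S] (adj : S → S → Prop) (I I' : Finset S) : Prop :=
  I ∩ I' = ∅ ∧ ¬ ConnOn adj (I ∪ I')

/-- `I^{ev}`: the set of `s ∈ I` such that `I ∖ {s}` is the disjoint union of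
`I', I'' ∈ Cal_I^1` with `I' ♠ I''`. -/
def Iev {S : Type} [DecidableEq S] (adj : S → S → Prop) (I : Finset S) : Set S :=
  {s | s ∈ I ∧ ∃ I' I'' : Finset S, CalI1 adj I' ∧ CalI1 adj I'' ∧
    Spade adj I' I'' ∧ I.erase s = I' ∪ I''}

/-- Property (P0). -/
def P0 {S : Type} [DecidableEq S] (adj : S → S → Prop) (B : Finset (Finset S)) : Prop :=
  ∀ I ∈ B, ∀ I' ∈ B, I = I' ∨ Spade adj I I' ∨ Prec adj I I' ∨ Prec adj I' I

/-- Property (P1). -/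
def P1 {S : Type} [DecidableEq S] (adj : S → S → Prop) (B : Finset (Finset S)) : Prop :=
  ∀ I ∈ B, ∃ (k : ℕ) (f : Fin k → Finset S),
    (∀ j, f j ∈ B ∧ Prec adj (f j) I) ∧
    (∀ j j', j ≠ j' → Disjoint (f j) (f j')) ∧
    Iev adj I ⊆ ⋃ j, ((f j : Finset S) : Set S)

/-- `phi`: finite sets `B` of elements of `Cal_I^1` satisfying (P0) and (P1). -/
def phiSet {S : Type} [DecidableEq S] (adj : S → S → Prop) : Set (Finset (Finset S)) :=
  {B | (∀ I ∈ B, CalI1 adj I) ∧ P0 adj B ∧ P1 adj B}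

/-- `supp(B)`. -/
def suppB {S : Type} [DecidableEq S] (B : Finset (Finset S)) : Finset S := B.biUnion id

/-- `g_s(B)`. -/
def gs {S : Type} [DecidableEq S] (B : Finset (Finset S)) (s : S) : ℕ :=
  (B.filter (fun I => s ∈ I)).card

/-- `e_I = ∑_{s ∈ I} e_s`. -/
def eSum {S : Type} {V : Type} [AddCommGroup V] [Module (ZMod 2) V]
    (e : S → V) (I : Finset S) : V := ∑ s ∈ I, e s

/-- `L_B`: the `F`-span of `{e_I : I ∈ B}`. -/
def LB {S : Type} {V : Type} [AddCommGroup V] [Module (ZMod 2) V]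
    (e : S → V) (B : Finset (Finset S)) : Submodule (ZMod 2) V :=
  Submodule.span (ZMod 2) ((fun I => eSum e I) '' (B : Set (Finset S)))

/-- `eps(B) = ∑_{s ∈ S} ((g_s(B)(g_s(B)+1)/2) mod 2) e_s`. -/
def epsB {S : Type} [DecidableEq S] [Fintype S] {V : Type} [AddCommGroup V]
    [Module (ZMod 2) V] (e : S → V) (B : Finset (Finset S)) : V :=
  ∑ s : S, ((gs B s * (gs B s + 1) / 2 : ℕ) : ZMod 2) • e s

/-- The triple `(V, <,>, e)` (with graph `adj`) is perfect. -/
def IsPerfect {S : Type} [DecidableEq S] [Fintype S] {V : Type} [AddCommGroup V]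
    [Module (ZMod 2) V] (adj : S → S → Prop) (e : S → V) : Prop :=
  (∀ B ∈ phiSet adj,
      (LinearIndependent (ZMod 2) (fun I : {I : Finset S // I ∈ B} => eSum e I.1)) ∧
      (∀ I : Finset S, CalI1 adj I → (eSum e I ∈ LB e B ↔ I ∈ B))) ∧
  (∀ B ∈ phiSet adj, epsB e B ∈ LB e B) ∧
  Set.BijOn (epsB e) (phiSet adj) (⋃ B ∈ phiSet adj, ((LB e B : Submodule (ZMod 2) V) : Set V)) ∧
  (∀ B ∈ phiSet adj, ∀ B' ∈ phiSet adj, epsB e B' ∈ LB e B → ∀ s : S, gs B' s ≤ gs B s)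
/-- Adjacency of the cycle of length `N` on `S = ZMod N`. -/
def cadj (N : ℕ) (i j : ZMod N) : Prop := j = i + 1 ∨ i = j + 1

/-- `V = F^S` for `S = ZMod N`. -/
abbrev Vc (N : ℕ) := ZMod N → ZMod 2

/-- The standard basis vector `e_s`. -/
def eVec (N : ℕ) (s : ZMod N) : Vc N := Pi.single s 1

/-- The line `F·e_S`, where `e_S = ∑_{s ∈ S} e_s`. -/
def radN (N : ℕ) [NeZero N] : Submodule (ZMod 2) (Vc N) :=
  Submodule.span (ZMod 2) {eSum (eVec N) Finset.univ}

/-- `Vbar = V / (F·e_S)`. -/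
abbrev VbarN (N : ℕ) [NeZero N] := Vc N ⧸ radN N

/-- The quotient map `pi : V → Vbar`. -/
def piQ (N : ℕ) [NeZero N] : Vc N →ₗ[ZMod 2] VbarN N := (radN N).mkQ

/-- `ebar_s = pi(e_s)`. -/
def ebar (N : ℕ) [NeZero N] (s : ZMod N) : VbarN N := piQ N (eVec N s)
open scoped Classical in
/-- The connected component of `s` in the induced subgraph of `adj` on `I`. -/
noncomputable def compOf {S : Type} [DecidableEq S] (adj : S → S → Prop)
    (I : Finset S) (s : S) : Finset S :=
  I.filter (fun t => Relation.ReflTransGen (fun a b => a ∈ I ∧ b ∈ I ∧ adj a b) s t)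

/-- `c(I)`: the set of vertex sets of connected components of the induced subgraph on `I`. -/
noncomputable def comps {S : Type} [DecidableEq S] (adj : S → S → Prop)
    (I : Finset S) : Finset (Finset S) :=
  I.image (compOf adj I)

/-- `|c^0(I)|`: the number of connected components of even cardinality. -/
noncomputable def c0card {S : Type} [DecidableEq S] (adj : S → S → Prop)
    (I : Finset S) : ℕ :=
  ((comps adj I).filter (fun C => Even C.card)).card

/-- `V_0 = {e_I : I ⊊ S with |c^0(I)| even}`. -/
def V0set (N : ℕ) [NeZero N] : Set (Vc N) :=
  {v | ∃ I : Finset (ZMod N), I ≠ Finset.univ ∧ Even (c0card (cadj N) I) ∧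
    v = eSum (eVec N) I}

/-- `V_1 = {e_S} ∪ {e_I : ∅ ≠ I ⊊ S with |c^0(I)| odd}`. -/
def V1set (N : ℕ) [NeZero N] : Set (Vc N) :=
  {v | v = eSum (eVec N) Finset.univ ∨ ∃ I : Finset (ZMod N), I ≠ ∅ ∧ I ≠ Finset.univ ∧
    Odd (c0card (cadj N) I) ∧ v = eSum (eVec N) I}
open scoped Classical in
/-- `I^{odd} = I ∖ I^{ev}` (as a `Finset`). -/
noncomputable def IoddF {S : Type} [DecidableEq S] (adj : S → S → Prop)
    (I : Finset S) : Finset S :=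
  I.filter (fun s => s ∉ Iev adj I)

/-- `n_B = |{I ∈ B : ee ⊆ I}|`. -/
def nB {S : Type} [DecidableEq S] (ee : Finset S) (B : Finset (Finset S)) : ℕ :=
  (B.filter (fun I => ee ⊆ I)).card

open scoped Classical in
/-- `B ↦ B^!`: remove the unique `I_B ∈ B` with `|I_B ∩ ee| = 1` when `n_B` is odd;
leave `B` unchanged when `n_B` is even. -/
noncomputable def bangF {S : Type} [DecidableEq S] (ee : Finset S)
    (B : Finset (Finset S)) : Finset (Finset S) :=
  if h : Odd (nB ee B) ∧ ∃ I ∈ B, (I ∩ ee).card = 1 then B.erase h.2.choose else B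

/-- `omega = {B^! : B ∈ phi}`. -/
def omegaSet {S : Type} [DecidableEq S] (adj : S → S → Prop) (ee : Finset S) :
    Set (Finset (Finset S)) :=
  (bangF ee) '' (phiSet adj)

open scoped Classical in
/-- `Btilde`: the unique element of `phi` with `Btilde^! = B`. -/
noncomputable def tildeF {S : Type} [DecidableEq S] (adj : S → S → Prop) (ee : Finset S)
    (C : Finset (Finset S)) : Finset (Finset S) :=
  if h : ∃ B ∈ phiSet adj, bangF ee B = C then h.choose else ∅

/-- `'eps(B) = eps(Btilde)`. -/
noncomputable def epsO {S : Type} [DecidableEq S] [Fintype S] {V : Type} [AddCommGroup V]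
    [Module (ZMod 2) V] (adj : S → S → Prop) (ee : Finset S) (e : S → V)
    (C : Finset (Finset S)) : V :=
  epsB e (tildeF adj ee C)

/-- `B' ⪯ B` on `omega`. -/
def preceqO {S : Type} [DecidableEq S] [Fintype S] {V : Type} [AddCommGroup V]
    [Module (ZMod 2) V] (adj : S → S → Prop) (ee : Finset S) (e : S → V)
    (B' B : Finset (Finset S)) : Prop :=
  ∃ (k : ℕ) (c : ℕ → Finset (Finset S)), c 0 = B' ∧ c k = B ∧
    (∀ i ≤ k, c i ∈ omegaSet adj ee) ∧
    (∀ i < k, epsO adj ee e (c i) ∈ LB e (c (i + 1)))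

/-- The linear form `v ↦ v t + v t'` on `V`. -/
def zeeV (N : ℕ) (t t' : ZMod N) : Vc N →ₗ[ZMod 2] ZMod 2 :=
  (LinearMap.proj t : Vc N →ₗ[ZMod 2] ZMod 2) + (LinearMap.proj t' : Vc N →ₗ[ZMod 2] ZMod 2)

/-- `z_ee : Vbar → F`, the linear map with `z_ee(ebar_s) = 1` iff `s ∈ ee = {t,t'}`. -/
noncomputable def zee (N : ℕ) [NeZero N] (t t' : ZMod N) : VbarN N →ₗ[ZMod 2] ZMod 2 :=
  Submodule.liftQ (radN N) (zeeV N t t') (by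
    rw [radN, Submodule.span_le, Set.singleton_subset_iff]
    have h1 : ∀ u : ZMod N, (eSum (eVec N) Finset.univ) u = 1 := by
      intro u
      simp [eSum, eVec, Finset.sum_apply, Finset.sum_pi_single]
    simp only [SetLike.mem_coe, LinearMap.mem_ker, zeeV, LinearMap.add_apply,
      LinearMap.proj_apply, h1]
    decide)
/-- The maximal elements of a finite family of finsets, under inclusion. -/
def maxElts {S : Type} [DecidableEq S] (C : Finset (Finset S)) : Finset (Finset S) :=
  C.filter (fun I => ∀ I' ∈ C, ¬ I ⊂ I')

/-- `restB B k = B ∖ (B_1 ∪ … ∪ B_k)`: what remains of `B` after removing the first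
`k` layers; the `k`-th layer (`k ≥ 1`) is `B_k = maxElts (restB B (k-1))`. -/
def restB {S : Type} [DecidableEq S] (B : Finset (Finset S)) : ℕ → Finset (Finset S)
  | 0 => B
  | k + 1 => restB B k \ maxElts (restB B k)

/-- The relation `B' ≤ B` on `phi(V)`. -/
def lePhi {S : Type} [DecidableEq S] [Fintype S] {V : Type} [AddCommGroup V]
    [Module (ZMod 2) V] (adj : S → S → Prop) (e : S → V)
    (B' B : Finset (Finset S)) : Prop :=
  ∃ (k : ℕ) (c : ℕ → Finset (Finset S)), c 0 = B' ∧ c k = B ∧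
    (∀ i ≤ k, c i ∈ phiSet adj) ∧
    (∀ i < k, epsB e (c i) ∈ LB e (c (i + 1)))

/-!
For `∅ ≠ I ⊊ S` the components of `I` and of `Iᶜ` alternate around the cycle, so both are
counted by the right end points `i ∈ I`, `i + 1 ∉ I`. As `|I|` is congruent to the number of odd
components, `|c⁰(I)| ≡ |c(I)| + |I| (mod 2)`; adding this for `I` and `Iᶜ` gives
`|c⁰(I)| + |c⁰(Iᶜ)| ≡ N ≡ 1`. Hence `I ↦ Iᶜ` exchanges the index sets of `V₀` and `V₁`, and since
`π(e_I) = π(e_J)` iff `J = I` or `J = Iᶜ`, every fibre of `π` meets `V₀` exactly once.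
-/

open Finset

section Components

variable {S : Type} [DecidableEq S] {adj : S → S → Prop} {I : Finset S} {s t : S}

lemma mem_compOf :
    t ∈ compOf adj I s ↔
      t ∈ I ∧ Relation.ReflTransGen (fun a b => a ∈ I ∧ b ∈ I ∧ adj a b) s t := by
  simp [compOf]

lemma compOf_eq_compOf_iff [Std.Symm adj] (ht : t ∈ I) :
    compOf adj I t = compOf adj I s ↔ t ∈ compOf adj I s := by
  have : Std.Symm (fun a b => a ∈ I ∧ b ∈ I ∧ adj a b) :=
    ⟨fun _ _ ⟨ha, hb, hab⟩ => ⟨hb, ha, symm hab⟩⟩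
  refine ⟨fun h => h ▸ mem_compOf.2 ⟨ht, .refl⟩, fun h => ?_⟩
  have hst := (mem_compOf.1 h).2
  ext x
  simp only [mem_compOf]
  exact and_congr_right fun _ => ⟨(hst.trans ·), (symm hst).trans⟩

lemma card_eq_sum_card_comps [Std.Symm adj] (I : Finset S) :
    #I = ∑ C ∈ comps adj I, #C := by
  rw [comps, card_eq_sum_card_image (compOf adj I) I]
  refine sum_congr rfl fun C hC => ?_
  obtain ⟨s, -, rfl⟩ := mem_image.1 hC
  congr 1
  ext t
  rw [mem_filter]
  exact ⟨fun ⟨ht, h⟩ => (compOf_eq_compOf_iff ht).1 h,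
    fun h => ⟨(mem_compOf.1 h).1, (compOf_eq_compOf_iff (mem_compOf.1 h).1).2 h⟩⟩

lemma c0card_add_card_comps_add_card [Std.Symm adj] (I : Finset S) :
    (c0card adj I + #(comps adj I) + #I : ZMod 2) = 0 := by
  rw [c0card, card_filter, card_eq_sum_card_comps (adj := adj) I, card_eq_sum_ones (comps adj I)]
  push_cast
  rw [← sum_add_distrib, ← sum_add_distrib]
  refine sum_eq_zero fun C _ => ?_
  by_cases h : Even #C
  · simp only [h, if_true, (ZMod.natCast_eq_zero_iff_even).2 h]
    decide
  · simp only [h, if_false, (ZMod.natCast_eq_one_iff_odd).2 (Nat.not_even_iff_odd.1 h)]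
    decide

lemma c0card_empty : c0card adj (∅ : Finset S) = 0 := by
  simp [c0card, comps]

end Components

section Cycle

variable {N : ℕ} {I : Finset (ZMod N)} {i j t : ZMod N}

instance : Std.Symm (cadj N) := ⟨fun _ _ h => h.symm⟩

def rightEnds (I : Finset (ZMod N)) : Finset (ZMod N) := {i ∈ I | i + 1 ∉ I}

lemma exists_eq_sub_of_reflTransGen (hi : i ∈ rightEnds I)
    (h : Relation.ReflTransGen (fun a b => a ∈ I ∧ b ∈ I ∧ cadj N a b) i t) :
    ∃ k : ℕ, t = i - k ∧ ∀ m ≤ k, i - m ∈ I := by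
  rw [rightEnds, mem_filter] at hi
  induction h with
  | refl => exact ⟨0, by simp, fun m hm => by simpa [Nat.le_zero.1 hm] using hi.1⟩
  | tail _ hstep ih =>
    obtain ⟨k, rfl, hseg⟩ := ih
    obtain ⟨-, hb, hadj | hadj⟩ := hstep
    · obtain _ | k := k
      · simp_all
      · refine ⟨k, by rw [hadj]; push_cast; ring, fun m hm => hseg m (by omega)⟩
    · refine ⟨k + 1, ?_, fun m hm => ?_⟩
      · rw [eq_sub_of_add_eq hadj.symm]; push_cast; ring
      · rcases hm.eq_or_lt with rfl | hlt
        · rwa [Nat.cast_succ, ← sub_sub, ← eq_sub_of_add_eq hadj.symm]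
        · exact hseg m (by omega)

lemma eq_of_mem_rightEnds_of_reflTransGen (hi : i ∈ rightEnds I) (hj : j ∈ rightEnds I)
    (h : Relation.ReflTransGen (fun a b => a ∈ I ∧ b ∈ I ∧ cadj N a b) i j) : i = j := by
  obtain ⟨k, rfl, hseg⟩ := exists_eq_sub_of_reflTransGen hi h
  obtain _ | k := k
  · simp
  · refine absurd ?_ (mem_filter.1 hj).2
    simpa [sub_add] using hseg k (by omega)

lemma reflTransGen_add_natCast (k : ℕ) (hseg : ∀ m ≤ k, t + m ∈ I) :
    Relation.ReflTransGen (fun a b => a ∈ I ∧ b ∈ I ∧ cadj N a b) t (t + k) := by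
  induction k with
  | zero => simpa using .refl
  | succ k ih =>
    refine (ih fun m hm => hseg m (by omega)).tail ⟨hseg k (by omega), hseg (k + 1) le_rfl, ?_⟩
    left; push_cast; ring

lemma exists_mem_rightEnds_reflTransGen [NeZero N] (hI : I ≠ univ) (ht : t ∈ I) :
    ∃ i ∈ rightEnds I,
      Relation.ReflTransGen (fun a b => a ∈ I ∧ b ∈ I ∧ cadj N a b) t i := by
  obtain ⟨u, hu⟩ := not_forall.1 (mt eq_univ_iff_forall.2 hI)
  have hexit : ∃ k : ℕ, t + (k + 1 : ℕ) ∉ I := by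
    refine ⟨(u - t).val - 1, ?_⟩
    have hpos : 0 < (u - t).val := by
      rw [Nat.pos_iff_ne_zero, ne_eq, ZMod.val_eq_zero, sub_eq_zero]
      exact fun h => hu (h ▸ ht)
    rwa [Nat.sub_add_cancel hpos, ZMod.natCast_zmod_val, add_sub_cancel]
  classical
  let k := Nat.find hexit
  have hseg : ∀ m ≤ k, t + m ∈ I := by
    rintro (_ | m) hm
    · simpa using ht
    · exact not_not.1 (Nat.find_min hexit (m := m) (by omega))
  refine ⟨t + k, mem_filter.2 ⟨hseg k le_rfl, ?_⟩, reflTransGen_add_natCast k hseg⟩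
  rw [add_assoc]
  exact_mod_cast Nat.find_spec hexit

lemma card_comps_cadj [NeZero N] (hI : I ≠ univ) : #(comps (cadj N) I) = #(rightEnds I) := by
  symm
  refine card_bij (fun i _ => compOf (cadj N) I i)
    (fun i hi => mem_image_of_mem _ (mem_filter.1 hi).1) (fun i hi j hj hij => ?_) ?_
  · refine eq_of_mem_rightEnds_of_reflTransGen hi hj (mem_compOf.1 ?_).2
    exact hij ▸ mem_compOf.2 ⟨(mem_filter.1 hj).1, .refl⟩
  · intro C hC
    obtain ⟨t, ht, rfl⟩ := mem_image.1 hC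
    obtain ⟨i, hi, hti⟩ := exists_mem_rightEnds_reflTransGen hI ht
    have hiI := (mem_filter.1 hi).1
    exact ⟨i, hi, (compOf_eq_compOf_iff hiI).2 (mem_compOf.2 ⟨hiI, hti⟩)⟩

lemma card_rightEnds_compl [NeZero N] (I : Finset (ZMod N)) :
    #(rightEnds Iᶜ) = #(rightEnds I) := by
  have hshift : #{i | i + 1 ∈ I} = #I := card_equiv (Equiv.addRight 1) (by simp)
  have hsplit := card_filter_add_card_filter_not (s := {i | i + 1 ∈ I}) (· ∈ I)
  have hI : #{i ∈ I | i + 1 ∈ I} + #(rightEnds I) = #I := card_filter_add_card_filter_not _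
  have hentries : ({i ∈ {i | i + 1 ∈ I} | i ∉ I} : Finset (ZMod N)) = rightEnds Iᶜ := by
    ext i; simp [rightEnds, and_comm]
  have hinner : ({i ∈ {i | i + 1 ∈ I} | i ∈ I} : Finset (ZMod N)) = {i ∈ I | i + 1 ∈ I} := by
    ext i; simp [and_comm]
  rw [hentries, hinner, hshift] at hsplit
  omega

lemma odd_c0card_add_c0card_compl [NeZero N] (hodd : Odd N) (hne : I ≠ ∅) (hI : I ≠ univ) :
    Odd (c0card (cadj N) I + c0card (cadj N) Iᶜ) := by
  have h := c0card_add_card_comps_add_card (adj := cadj N) I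
  have hc := c0card_add_card_comps_add_card (adj := cadj N) Iᶜ
  rw [card_comps_cadj hI] at h
  rw [card_comps_cadj (by rwa [ne_eq, compl_eq_univ_iff]), card_rightEnds_compl] at hc
  have hN : (#I + #Iᶜ : ZMod 2) = 1 := by
    exact_mod_cast (card_add_card_compl I).trans (ZMod.card N) ▸
      (ZMod.natCast_eq_one_iff_odd).2 hodd
  rw [← ZMod.natCast_eq_one_iff_odd]
  push_cast
  linear_combination (norm := ring_nf) h + hc - hN
  reduce_mod_char

end Cycle

def evenComponentSets (N : ℕ) [NeZero N] : Set (Finset (ZMod N)) :=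
  {I | I ≠ univ ∧ Even (c0card (cadj N) I)}

lemma compl_mem_evenComponentSets_iff {N : ℕ} [NeZero N] (hodd : Odd N) (I : Finset (ZMod N)) :
    Iᶜ ∈ evenComponentSets N ↔ I ∉ evenComponentSets N := by
  have hne_univ : (∅ : Finset (ZMod N)) ≠ univ := univ_nonempty.ne_empty.symm
  by_cases hne : I = ∅
  · simpa [evenComponentSets, hne, c0card_empty] using hne_univ
  by_cases hI : I = univ
  · simpa [evenComponentSets, hI, c0card_empty] using hne_univ
  have hparity := odd_c0card_add_c0card_compl hodd hne hI
  rw [Nat.odd_add', ← Nat.not_even_iff_odd] at hparity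
  simp only [evenComponentSets, Set.mem_ofPred_eq, ne_eq, compl_eq_univ_iff, hne, hI,
    not_false_eq_true, true_and]
  tauto

lemma ncard_eq_two_pow_of_compl_mem_iff {α : Type*} [Fintype α] [Nonempty α] [DecidableEq α]
    {A : Set (Finset α)} (hA : ∀ I, Iᶜ ∈ A ↔ I ∉ A) :
    A.ncard = 2 ^ (Fintype.card α - 1) := by
  have hcompl : compl '' A = Aᶜ := by
    rw [Set.image_eq_preimage_of_inverse compl_compl compl_compl]
    exact Set.ext hA
  have hsum := Set.ncard_add_ncard_compl A
  rw [← hcompl, Set.ncard_image_of_injective _ compl_injective, Nat.card_eq_fintype_card,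
    Fintype.card_finset] at hsum
  have hpow : 2 ^ Fintype.card α = 2 * 2 ^ (Fintype.card α - 1) := by
    rw [← pow_succ', Nat.sub_add_cancel Fintype.card_pos]
  omega

lemma mem_span_singleton_zmod_two {V : Type*} [AddCommGroup V] [Module (ZMod 2) V] {x y : V} :
    y ∈ Submodule.span (ZMod 2) {x} ↔ y = 0 ∨ y = x := by
  rw [Submodule.mem_span_singleton]
  constructor
  · rintro ⟨a, rfl⟩
    fin_cases a
    exacts [Or.inl (zero_smul _ x), Or.inr (one_smul _ x)]
  · rintro (rfl | rfl)
    exacts [⟨0, zero_smul _ x⟩, ⟨1, one_smul _ y⟩]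

lemma eSum_add_eSum_compl {S V : Type} [Fintype S] [DecidableEq S] [AddCommGroup V]
    [Module (ZMod 2) V] (e : S → V) (I : Finset S) :
    eSum e I + eSum e Iᶜ = eSum e univ :=
  sum_add_sum_compl I e

lemma eSum_eVec_apply {N : ℕ} (I : Finset (ZMod N)) (u : ZMod N) :
    eSum (eVec N) I u = if u ∈ I then 1 else 0 := by
  simp [eSum, eVec, Finset.sum_apply, Pi.single_apply]

section Linear

variable {N : ℕ} [NeZero N]

lemma eSum_eVec_bijective : Function.Bijective (eSum (eVec N)) := by
  refine ⟨fun I J h => ?_, fun v => ⟨({u | v u ≠ 0} : Finset (ZMod N)), funext fun u => ?_⟩⟩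
  · ext u
    have hu := congr_fun h u
    simp only [eSum_eVec_apply] at hu
    split_ifs at hu <;> simp_all
  · simp only [eSum_eVec_apply, mem_filter, mem_univ, true_and]
    generalize v u = a
    revert a
    decide

lemma piQ_eSum_eq_piQ_eSum_iff {I J : Finset (ZMod N)} :
    piQ N (eSum (eVec N) I) = piQ N (eSum (eVec N) J) ↔ J = I ∨ J = Iᶜ := by
  have hneg : ∀ v : Vc N, -v = v := fun v => funext fun u => ZMod.neg_eq_self_mod_two (v u)
  rw [piQ, Submodule.mkQ_apply, Submodule.mkQ_apply, Submodule.Quotient.eq, radN,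
    mem_span_singleton_zmod_two, sub_eq_zero, ← eSum_add_eSum_compl _ I, sub_eq_add_neg,
    add_right_inj, hneg, eSum_eVec_bijective.1.eq_iff, eSum_eVec_bijective.1.eq_iff, eq_comm]

lemma bijOn_piQ_image_eSum {A : Set (Finset (ZMod N))} (hA : ∀ I, Iᶜ ∈ A ↔ I ∉ A) :
    Set.BijOn (piQ N) (eSum (eVec N) '' A) Set.univ := by
  refine ⟨Set.mapsTo_univ _ _, ?_, fun x _ => ?_⟩
  · rintro _ ⟨I, hI, rfl⟩ _ ⟨J, hJ, rfl⟩ h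
    obtain rfl | rfl := piQ_eSum_eq_piQ_eSum_iff.1 h
    · rfl
    · exact absurd hI ((hA I).1 hJ)
  obtain ⟨v, rfl⟩ := (radN N).mkQ_surjective x
  obtain ⟨I, rfl⟩ := eSum_eVec_bijective.2 v
  by_cases hI : I ∈ A
  · exact ⟨_, Set.mem_image_of_mem _ hI, rfl⟩
  · exact ⟨_, Set.mem_image_of_mem _ ((hA I).2 hI),
      piQ_eSum_eq_piQ_eSum_iff.2 (Or.inr (compl_compl I).symm)⟩

lemma V0set_eq : V0set N = eSum (eVec N) '' evenComponentSets N :=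
  Set.ext fun _ => ⟨fun ⟨I, hI, he, hv⟩ => ⟨I, ⟨hI, he⟩, hv.symm⟩,
    fun ⟨I, ⟨hI, he⟩, hv⟩ => ⟨I, hI, he, hv.symm⟩⟩

lemma V1set_eq : V1set N = eSum (eVec N) '' (evenComponentSets N)ᶜ := by
  ext v
  constructor
  · rintro (rfl | ⟨I, -, -, hodd, rfl⟩)
    · exact ⟨univ, fun h => h.1 rfl, rfl⟩
    · exact ⟨I, fun h => Nat.not_even_iff_odd.2 hodd h.2, rfl⟩
  · rintro ⟨I, hI, rfl⟩
    by_cases hu : I = univ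
    · exact Or.inl (hu ▸ rfl)
    have hodd : Odd (c0card (cadj N) I) := Nat.not_even_iff_odd.1 fun he => hI ⟨hu, he⟩
    refine Or.inr ⟨I, ?_, hu, hodd, rfl⟩
    rintro rfl
    simp [c0card_empty] at hodd

end Linear

theorem statement6_general (N : ℕ) [NeZero N] (hodd : Odd N) :
    Set.BijOn (piQ N) (V0set N) (Set.univ : Set (VbarN N)) ∧
    (V0set N).ncard = 2 ^ (N - 1) ∧ (V1set N).ncard = 2 ^ (N - 1) := by
  have hA := compl_mem_evenComponentSets_iff hodd
  have hAc : ∀ I, Iᶜ ∈ (evenComponentSets N)ᶜ ↔ I ∉ (evenComponentSets N)ᶜ := fun I => by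
    simpa using (hA I).not
  rw [V0set_eq, V1set_eq, Set.ncard_image_of_injective _ eSum_eVec_bijective.1,
    Set.ncard_image_of_injective _ eSum_eVec_bijective.1]
  exact ⟨bijOn_piQ_image_eSum hA, by simpa using ncard_eq_two_pow_of_compl_mem_iff hA,
    by simpa using ncard_eq_two_pow_of_compl_mem_iff hAc⟩

/-- `pi` restricts to a bijection from `V_0` onto `Vbar`; in particular
`|V_0| = |V_1| = 2^{N-1}`. -/
theorem statement6 (N : ℕ) [NeZero N] (hN : 3 ≤ N) (hodd : Odd N) :
    Set.BijOn (piQ N) (V0set N) (Set.univ : Set (VbarN N)) ∧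
    (V0set N).ncard = 2 ^ (N - 1) ∧ (V1set N).ncard = 2 ^ (N - 1) :=
  statement6_general N hodd
end

section
/- Let N ≥ 3 be odd and let (S,E) be the cycle of length N. Let B in phi and I in B. Then the number of I' in B with I' ⊆ I equals (|I|+1)/2. -/
open Finset

section Path

variable {S : Type} {adj : S → S → Prop} {m : ℕ} {f : Fin (m + 1) → S}

def IsPathEnum (adj : S → S → Prop) (f : Fin (m + 1) → S) : Prop :=
  Function.Injective f ∧
    ∀ i j : Fin (m + 1), adj (f i) (f j) ↔ ((i : ℕ) + 1 = j ∨ (j : ℕ) + 1 = i)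

lemma IsPathEnum.adj_succ (hf : IsPathEnum adj f) {i j : Fin (m + 1)} (h : (i : ℕ) + 1 = j) :
    adj (f i) (f j) ∧ adj (f j) (f i) :=
  ⟨(hf.2 i j).2 (Or.inl h), (hf.2 j i).2 (Or.inr h)⟩

variable [DecidableEq S]

lemma IsPathOn.exists_isPathEnum {I : Finset S} (h : IsPathOn adj I) :
    ∃ (m : ℕ) (f : Fin (m + 1) → S), IsPathEnum adj f ∧ I = univ.image f :=
  let ⟨m, f, hinj, hI, hadj⟩ := h
  ⟨m, f, ⟨hinj, hadj⟩, hI⟩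

def seg (f : Fin (m + 1) → S) (a b : ℕ) : Finset S :=
  (univ.filter fun i : Fin (m + 1) => a ≤ (i : ℕ) ∧ (i : ℕ) ≤ b).image f

lemma mem_seg {a b : ℕ} {x : S} :
    x ∈ seg f a b ↔ ∃ i : Fin (m + 1), a ≤ (i : ℕ) ∧ (i : ℕ) ≤ b ∧ f i = x := by
  simp [seg, and_assoc]

lemma apply_mem_seg {a b : ℕ} {i : Fin (m + 1)} (ha : a ≤ i) (hb : (i : ℕ) ≤ b) :
    f i ∈ seg f a b :=
  mem_seg.2 ⟨i, ha, hb, rfl⟩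

lemma seg_zero_eq_image : seg f 0 m = univ.image f := by
  ext x
  simp only [mem_seg, mem_image, mem_univ, true_and, zero_le]
  exact ⟨fun ⟨i, _, hi⟩ => ⟨i, hi⟩, fun ⟨i, hi⟩ => ⟨i, Nat.lt_succ_iff.1 i.isLt, hi⟩⟩

lemma card_seg (hf : Function.Injective f) {a b : ℕ} (hb : b ≤ m) :
    (seg f a b).card = b + 1 - a := by
  have hval : (univ.filter fun i : Fin (m + 1) => a ≤ (i : ℕ) ∧ (i : ℕ) ≤ b).map Fin.valEmbedding
      = Icc a b := by
    ext k
    simp only [mem_map, mem_filter, mem_univ, true_and, Fin.valEmbedding_apply, mem_Icc]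
    exact ⟨fun ⟨i, hi, hik⟩ => hik ▸ hi, fun hk => ⟨⟨k, by omega⟩, hk, rfl⟩⟩
  rw [seg, card_image_of_injective _ hf, ← card_map, hval, Nat.card_Icc]

lemma seg_union_seg {a b c : ℕ} (hab : a ≤ b + 1) (hbc : b ≤ c) :
    seg f a b ∪ seg f (b + 1) c = seg f a c := by
  rw [seg, seg, seg, ← image_union, ← filter_or]
  congr 1
  ext i
  simp only [mem_filter, mem_univ, true_and]
  omega

namespace IsPathEnum

lemma connOn_seg (hf : IsPathEnum adj f) (a b : ℕ) : ConnOn adj (seg f a b) := by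
  set R := fun x y => x ∈ seg f a b ∧ y ∈ seg f a b ∧ adj x y
  have hR : Std.Symm R := ⟨fun x y ⟨hx, hy, hxy⟩ => ⟨hy, hx, by
    obtain ⟨i, -, -, rfl⟩ := mem_seg.1 hx
    obtain ⟨j, -, -, rfl⟩ := mem_seg.1 hy
    exact (hf.2 j i).2 ((hf.2 i j).1 hxy).symm⟩⟩
  have hup : ∀ i j : Fin (m + 1), a ≤ (i : ℕ) → (i : ℕ) ≤ j → (j : ℕ) ≤ b →
      Relation.ReflTransGen R (f i) (f j) := by
    intro i j hai hij hjb
    obtain ⟨k, hk⟩ := Nat.exists_eq_add_of_le hij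
    induction k generalizing j with
    | zero => rw [Fin.ext (hk.trans (add_zero _)).symm]
    | succ k ih =>
      have hj' : (i : ℕ) + k < m + 1 := by omega
      refine (ih ⟨_, hj'⟩ (by simp) (by simp; omega) rfl).tail
        ⟨apply_mem_seg (by simp; omega) (by simp; omega), apply_mem_seg (by omega) hjb,
          (hf.adj_succ (by simp; omega)).1⟩
  intro x hx y hy
  obtain ⟨i, hai, hib, rfl⟩ := mem_seg.1 hx
  obtain ⟨j, haj, hjb, rfl⟩ := mem_seg.1 hy
  rcases le_total (i : ℕ) j with hij | hji
  · exact hup i j hai hij hjb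
  · exact Std.Symm.symm _ _ (hup j i haj hji hib)

lemma not_connOn_image_of_gap (hf : IsPathEnum adj f) {T : Finset (Fin (m + 1))}
    {i p j : Fin (m + 1)} (hi : i ∈ T) (hj : j ∈ T) (hp : p ∉ T) (hip : i < p) (hpj : p < j) :
    ¬ ConnOn adj (T.image f) := by
  intro hconn
  have below : ∀ x, Relation.ReflTransGen (fun x y => x ∈ T.image f ∧ y ∈ T.image f ∧ adj x y)
      (f i) x → ∃ u ∈ T, f u = x ∧ u < p := by
    intro x hx
    induction hx with
    | refl => exact ⟨i, hi, rfl, hip⟩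
    | tail _ hstep ih =>
      obtain ⟨u, hu, rfl, hup⟩ := ih
      obtain ⟨-, hv, hadj⟩ := hstep
      obtain ⟨v, hvT, rfl⟩ := mem_image.1 hv
      have hvp : v ≠ p := by rintro rfl; exact hp hvT
      rw [hf.2] at hadj
      exact ⟨v, hvT, rfl, by rw [Fin.lt_def] at hup ⊢; rw [Ne, Fin.ext_iff] at hvp; omega⟩
  obtain ⟨u, -, hu, hup⟩ := below (f j) (hconn _ (mem_image_of_mem f hi) _ (mem_image_of_mem f hj))
  exact absurd (hf.1 hu ▸ hup) (lt_asymm hpj)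

lemma isPathOn_seg (hf : IsPathEnum adj f) {a b : ℕ} (hab : a ≤ b) (hb : b ≤ m) :
    IsPathOn adj (seg f a b) := by
  refine ⟨b - a, fun i => f ⟨a + i, by omega⟩, fun i j h => ?_, ?_, fun i j => ?_⟩
  · have := congrArg Fin.val (hf.1 h)
    exact Fin.ext (by simpa using this)
  · ext x
    simp only [mem_seg, mem_image, mem_univ, true_and]
    constructor
    · rintro ⟨u, hau, hub, rfl⟩
      exact ⟨⟨u - a, by omega⟩, congrArg f (Fin.ext (by simp; omega))⟩
    · rintro ⟨i, rfl⟩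
      exact ⟨_, by simp, by simp; omega, rfl⟩
  · rw [hf.2]
    simp only [add_assoc, Nat.add_left_cancel_iff]

lemma exists_eq_seg (hf : IsPathEnum adj f) {J : Finset S} (hJI : J ⊆ univ.image f)
    (hne : J.Nonempty) (hJ : ConnOn adj J) : ∃ a b, a ≤ b ∧ b ≤ m ∧ J = seg f a b := by
  set T := univ.filter fun i => f i ∈ J
  have hJT : J = T.image f := by
    ext x
    simp only [T, mem_image, mem_filter, mem_univ, true_and]
    refine ⟨fun hx => ?_, fun ⟨i, hi, hix⟩ => hix ▸ hi⟩
    obtain ⟨i, -, rfl⟩ := mem_image.1 (hJI hx)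
    exact ⟨i, hx, rfl⟩
  have hT : T.Nonempty := by
    obtain ⟨x, hx⟩ := hne
    rw [hJT] at hx
    exact (mem_image.1 hx).imp fun i h => h.1
  refine ⟨T.min' hT, T.max' hT, Fin.le_def.1 (min'_le _ _ (max'_mem _ _)),
    Nat.lt_succ_iff.1 (T.max' hT).isLt, hJT.trans (congrArg (image f) ?_)⟩
  ext p
  simp only [mem_filter, mem_univ, true_and, ← Fin.le_iff_val_le_val]
  refine ⟨fun hp => ⟨min'_le _ _ hp, le_max' _ _ hp⟩, fun ⟨h1, h2⟩ => ?_⟩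
  by_contra hp
  refine hf.not_connOn_image_of_gap (min'_mem T hT) (max'_mem T hT) hp
    (lt_of_le_of_ne h1 ?_) (lt_of_le_of_ne h2 ?_) (hJT ▸ hJ)
  · rintro rfl; exact hp (min'_mem T hT)
  · rintro rfl; exact hp (max'_mem T hT)

lemma image_sdiff_seg (hf : IsPathEnum adj f) {a b c d : ℕ}
    (hcd : ∀ i : Fin (m + 1), c ≤ (i : ℕ) ∧ (i : ℕ) ≤ d ↔ ¬ (a ≤ (i : ℕ) ∧ (i : ℕ) ≤ b)) :
    univ.image f \ seg f a b = seg f c d := by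
  ext x
  simp only [mem_sdiff, mem_image, mem_univ, true_and, mem_seg]
  constructor
  · rintro ⟨⟨i, rfl⟩, hx⟩
    exact ⟨i, ((hcd i).2 fun hi => hx ⟨i, hi.1, hi.2, rfl⟩).1,
      ((hcd i).2 fun hi => hx ⟨i, hi.1, hi.2, rfl⟩).2, rfl⟩
  · rintro ⟨i, hci, hid, rfl⟩
    refine ⟨⟨i, rfl⟩, fun ⟨j, haj, hjb, hji⟩ => (hcd i).1 ⟨hci, hid⟩ ?_⟩
    rw [← hf.1 hji]
    exact ⟨haj, hjb⟩

lemma interior_of_not_connOn_sdiff (hf : IsPathEnum adj f) {a b : ℕ} (hb : b ≤ m)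
    (h : ¬ ConnOn adj (univ.image f \ seg f a b)) : 1 ≤ a ∧ b < m := by
  by_contra hend
  rcases Nat.eq_zero_or_pos a with rfl | ha
  · apply h
    rw [hf.image_sdiff_seg (c := b + 1) (d := m) fun i => by have := i.isLt; omega]
    exact hf.connOn_seg _ _
  · apply h
    rw [hf.image_sdiff_seg (c := 0) (d := a - 1) fun i => by have := i.isLt; omega]
    exact hf.connOn_seg _ _

lemma separated_of_spade (hf : IsPathEnum adj f) {a b a' b' : ℕ} (hab : a ≤ b) (hb : b ≤ m)
    (hab' : a' ≤ b') (h : Spade adj (seg f a b) (seg f a' b')) :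
    b + 1 < a' ∨ b' + 1 < a := by
  have hdisj : b < a' ∨ b' < a := by
    by_contra! hover
    let k : Fin (m + 1) := ⟨max a a', by omega⟩
    have hmem : f k ∈ seg f a b ∩ seg f a' b' :=
      mem_inter.2 ⟨apply_mem_seg (le_max_left _ _) (by simp [k]; omega),
        apply_mem_seg (le_max_right _ _) (by simp [k]; omega)⟩
    simp [h.1] at hmem
  by_contra! hnear
  rcases hdisj with hlt | hlt
  · obtain rfl : a' = b + 1 := by omega
    apply h.2
    rw [seg_union_seg (by omega) (by omega)]
    exact hf.connOn_seg a b'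
  · obtain rfl : a = b' + 1 := by omega
    apply h.2
    rw [union_comm, seg_union_seg (by omega) (by omega)]
    exact hf.connOn_seg a' b

lemma mem_Iev (hf : IsPathEnum adj f) (hm : Even m) {p : ℕ} (hp : Odd p) (hpm : p < m) :
    f ⟨p, by omega⟩ ∈ Iev adj (univ.image f) := by
  have hp1 : 1 ≤ p := hp.pos
  have hunion : seg f 0 (p - 1) ∪ seg f (p + 1) m = (univ.erase ⟨p, by omega⟩).image f := by
    rw [seg, seg, ← image_union, ← filter_or]
    congr 1
    ext i
    simp only [mem_filter, mem_univ, true_and, mem_erase, ne_eq, Fin.ext_iff, and_true]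
    have := i.isLt
    omega
  refine ⟨mem_image_of_mem f (mem_univ _), seg f 0 (p - 1), seg f (p + 1) m,
    ⟨hf.isPathOn_seg (by omega) (by omega), ?_⟩, ⟨hf.isPathOn_seg (by omega) le_rfl, ?_⟩,
    ⟨?_, ?_⟩, ?_⟩
  · rw [card_seg hf.1 (by omega)]
    convert hp using 1
    omega
  · rw [card_seg hf.1 le_rfl]
    obtain ⟨u, hu⟩ := hm
    obtain ⟨v, hv⟩ := hp
    exact ⟨u - v - 1, by omega⟩
  · refine eq_empty_of_forall_notMem fun x hx => ?_
    obtain ⟨⟨i, -, hi, rfl⟩, ⟨j, hj, -, hij⟩⟩ := And.imp mem_seg.1 mem_seg.1 (mem_inter.1 hx)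
    have := congrArg Fin.val (hf.1 hij)
    omega
  · rw [hunion]
    exact hf.not_connOn_image_of_gap (p := ⟨p, by omega⟩) (i := ⟨p - 1, by omega⟩)
      (j := ⟨p + 1, by omega⟩)
      (by simp [Fin.ext_iff]; omega) (by simp [Fin.ext_iff]) (by simp)
      (by simp [Fin.lt_def]; omega) (by simp [Fin.lt_def])
  · rw [hunion, image_erase hf.1]

end IsPathEnum

lemma IsPathOn.connOn {I : Finset S} (h : IsPathOn adj I) : ConnOn adj I := by
  obtain ⟨m, f, hf, rfl⟩ := h.exists_isPathEnum
  exact seg_zero_eq_image (f := f) ▸ hf.connOn_seg 0 m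

end Path

/-- The intervals `[a i, b i + 1]` tile `[1, m]`: each `[a i, b i]` is followed by a gap of
exactly one point, since a longer gap would contain an odd point. -/
lemma sum_add_two_sub_eq_of_cover_odd {ι : Type*} (s : Finset ι) (a b : ι → ℕ) {m : ℕ}
    (hm : Even m) (hbounds : ∀ i ∈ s, 1 ≤ a i ∧ a i ≤ b i ∧ b i < m)
    (hsep : ∀ i ∈ s, ∀ j ∈ s, i ≠ j → b i + 1 < a j ∨ b j + 1 < a i)
    (hcover : ∀ p, Odd p → p < m → ∃ i ∈ s, a i ≤ p ∧ p ≤ b i) :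
    ∑ i ∈ s, (b i + 2 - a i) = m := by
  have htile : s.biUnion (fun i => Icc (a i) (b i + 1)) = Icc 1 m := by
    ext p
    simp only [mem_biUnion, mem_Icc]
    constructor
    · rintro ⟨i, hi, hp⟩
      have := hbounds i hi
      omega
    · rintro ⟨h1, h2⟩
      obtain ⟨q, hq⟩ | hodd := Nat.even_or_odd p
      · obtain ⟨i, hi, hpi⟩ := hcover (p - 1) ⟨q - 1, by omega⟩ (by omega)
        exact ⟨i, hi, by omega⟩
      · have hpm : p < m := by obtain ⟨r, hr⟩ := hm; obtain ⟨u, hu⟩ := hodd; omega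
        obtain ⟨i, hi, hpi⟩ := hcover p hodd hpm
        exact ⟨i, hi, by omega⟩
  have hdisj : (s : Set ι).PairwiseDisjoint fun i => Icc (a i) (b i + 1) := by
    intro i hi j hj hij
    refine disjoint_left.2 fun p hpi hpj => ?_
    simp only [mem_Icc] at hpi hpj
    have := hsep i hi j hj hij
    omega
  have := card_biUnion hdisj
  simp only [htile, Nat.card_Icc, add_assoc, Nat.reduceAdd, Nat.add_sub_cancel] at this
  exact this.symm

section Phi

variable {S : Type} [DecidableEq S] {adj : S → S → Prop} {B : Finset (Finset S)}

lemma CalI1.nonempty {I : Finset S} (h : CalI1 adj I) : I.Nonempty :=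
  card_pos.1 h.2.pos

lemma exists_subset_mem_maxElts {C : Finset (Finset S)} {J : Finset S} (hJ : J ∈ C) :
    ∃ K ∈ maxElts C, J ⊆ K := by
  obtain ⟨K, hJK, hK⟩ := exists_le_maximal C hJ
  exact ⟨K, mem_filter.2 ⟨hK.1, fun L hL hKL => hKL.2 (hK.2 hL hKL.1)⟩, hJK⟩

lemma prec_of_ssubset (hB : B ∈ phiSet adj) {J I : Finset S} (hJ : J ∈ B) (hI : I ∈ B)
    (h : J ⊂ I) : Prec adj J I := by
  rcases hB.2.1 J hJ I hI with rfl | hspade | hprec | hprec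
  · exact absurd h (ssubset_irrefl J)
  · obtain ⟨x, hx⟩ := (hB.1 J hJ).nonempty
    simpa [hspade.1] using mem_inter.2 ⟨hx, h.subset hx⟩
  · exact hprec
  · exact absurd (hprec.1.trans h) (ssubset_irrefl I)

lemma spade_of_mem_maxElts (hB : B ∈ phiSet adj) {I J J' : Finset S}
    (hJ : J ∈ maxElts (B.filter (· ⊂ I))) (hJ' : J' ∈ maxElts (B.filter (· ⊂ I)))
    (hne : J ≠ J') : Spade adj J J' := by
  obtain ⟨hJB, hJmax⟩ := mem_filter.1 hJ
  obtain ⟨hJ'B, hJ'max⟩ := mem_filter.1 hJ'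
  rcases hB.2.1 J (mem_filter.1 hJB).1 J' (mem_filter.1 hJ'B).1 with h | h | h | h
  · exact absurd h hne
  · exact h
  · exact absurd h.1 (hJmax J' hJ'B)
  · exact absurd h.1 (hJ'max J hJB)

lemma card_filter_ssubset_eq_sum (hB : B ∈ phiSet adj) (I : Finset S) :
    (B.filter (· ⊂ I)).card =
      ∑ J ∈ maxElts (B.filter (· ⊂ I)), (B.filter (· ⊆ J)).card := by
  set M := maxElts (B.filter (· ⊂ I))
  have hunion : B.filter (· ⊂ I) = M.biUnion fun J => B.filter (· ⊆ J) := by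
    ext K
    simp only [mem_biUnion, mem_filter]
    constructor
    · intro hK
      obtain ⟨J, hJ, hKJ⟩ := exists_subset_mem_maxElts (C := B.filter (· ⊂ I)) (mem_filter.2 hK)
      exact ⟨J, hJ, hK.1, hKJ⟩
    · rintro ⟨J, hJ, hKB, hKJ⟩
      exact ⟨hKB, Finset.ssubset_of_subset_of_ssubset hKJ (mem_filter.1 (mem_filter.1 hJ).1).2⟩
  have hdisj : (M : Set (Finset S)).PairwiseDisjoint fun J => B.filter (· ⊆ J) := by
    intro J hJ J' hJ' hne
    refine disjoint_left.2 fun K hK hK' => ?_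
    obtain ⟨hKB, hKJ⟩ := mem_filter.1 hK
    obtain ⟨x, hx⟩ := (hB.1 K hKB).nonempty
    simpa [(spade_of_mem_maxElts hB hJ hJ' hne).1] using
      mem_inter.2 ⟨hKJ hx, (mem_filter.1 hK').2 hx⟩
  rw [hunion, card_biUnion hdisj]

lemma exists_mem_maxElts_of_mem_Iev (hB : B ∈ phiSet adj) {I : Finset S} (hI : I ∈ B) {x : S}
    (hx : x ∈ Iev adj I) : ∃ J ∈ maxElts (B.filter (· ⊂ I)), x ∈ J := by
  obtain ⟨k, g, hgB, -, hIev⟩ := hB.2.2 I hI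
  obtain ⟨j, hj⟩ := Set.mem_iUnion.1 (hIev hx)
  obtain ⟨J, hJ, hgJ⟩ := exists_subset_mem_maxElts (C := B.filter (· ⊂ I))
    (mem_filter.2 ⟨(hgB j).1, (hgB j).2.1⟩)
  exact ⟨J, hJ, hgJ hj⟩

lemma sum_card_maxElts_add_one (hB : B ∈ phiSet adj) {I : Finset S} (hI : I ∈ B) :
    ∑ J ∈ maxElts (B.filter (· ⊂ I)), (J.card + 1) + 1 = I.card := by
  obtain ⟨m, f, hf, rfl⟩ := (hB.1 I hI).1.exists_isPathEnum
  set M := maxElts (B.filter (· ⊂ univ.image f))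
  have hcard : (univ.image f).card = m + 1 := by
    rw [card_image_of_injective _ hf.1, card_univ, Fintype.card_fin]
  have hm : Even m := by
    obtain ⟨u, hu⟩ := hcard ▸ (hB.1 _ hI).2
    exact ⟨u, by omega⟩
  have hM : ∀ {J}, J ∈ M → J ∈ B ∧ J ⊂ univ.image f := fun hJ =>
    mem_filter.1 (mem_filter.1 hJ).1
  have hseg : ∀ J, ∃ a b, J ∈ M → a ≤ b ∧ b ≤ m ∧ J = seg f a b := by
    intro J
    by_cases hJ : J ∈ M
    · obtain ⟨hJB, hJI⟩ := hM hJ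
      obtain ⟨a, b, hab⟩ :=
        hf.exists_eq_seg hJI.subset (hB.1 J hJB).nonempty (hB.1 J hJB).1.connOn
      exact ⟨a, b, fun _ => hab⟩
    · exact ⟨0, 0, fun h => absurd h hJ⟩
  choose a b hsegJ using hseg
  have hinterior : ∀ J ∈ M, 1 ≤ a J ∧ b J < m := by
    intro J hJ
    obtain ⟨-, hb, hJseg⟩ := hsegJ J hJ
    refine hf.interior_of_not_connOn_sdiff hb ?_
    rw [← hJseg]
    exact (prec_of_ssubset hB (hM hJ).1 hI (hM hJ).2).2
  have hsep : ∀ J ∈ M, ∀ J' ∈ M, J ≠ J' → b J + 1 < a J' ∨ b J' + 1 < a J := by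
    intro J hJ J' hJ' hne
    obtain ⟨hab, hb, hJseg⟩ := hsegJ J hJ
    obtain ⟨hab', -, hJseg'⟩ := hsegJ J' hJ'
    refine hf.separated_of_spade hab hb hab' ?_
    rw [← hJseg, ← hJseg']
    exact spade_of_mem_maxElts hB hJ hJ' hne
  have hcover : ∀ p, Odd p → p < m → ∃ J ∈ M, a J ≤ p ∧ p ≤ b J := by
    intro p hp hpm
    obtain ⟨J, hJ, hpJ⟩ := exists_mem_maxElts_of_mem_Iev hB hI (hf.mem_Iev hm hp hpm)
    obtain ⟨i, hai, hib, hip⟩ := mem_seg.1 ((hsegJ J hJ).2.2 ▸ hpJ)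
    obtain rfl := hf.1 hip
    exact ⟨J, hJ, hai, hib⟩
  have htile := sum_add_two_sub_eq_of_cover_odd M a b hm
    (fun J hJ => ⟨(hinterior J hJ).1, (hsegJ J hJ).1, (hinterior J hJ).2⟩) hsep hcover
  have hJcard : ∀ J ∈ M, J.card + 1 = b J + 2 - a J := by
    intro J hJ
    obtain ⟨hab, hb, hJseg⟩ := hsegJ J hJ
    have := card_seg hf.1 (a := a J) hb
    rw [← hJseg] at this
    omega
  rw [sum_congr rfl hJcard, htile, hcard]

theorem card_filter_subset_of_mem_phiSet (hB : B ∈ phiSet adj) {I : Finset S} (hI : I ∈ B) :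
    (B.filter (· ⊆ I)).card = (I.card + 1) / 2 := by
  induction hn : I.card using Nat.strong_induction_on generalizing I with
  | _ n ih =>
  set M := maxElts (B.filter (· ⊂ I))
  have hsplit : B.filter (· ⊆ I) = insert I (B.filter (· ⊂ I)) := by
    ext K
    simp only [mem_filter, mem_insert]
    constructor
    · rintro ⟨hK, hKI⟩
      exact hKI.eq_or_ssubset.imp_right fun h => ⟨hK, h⟩
    · rintro (rfl | ⟨hK, hKI⟩)
      exacts [⟨hI, subset_rfl⟩, ⟨hK, hKI.le⟩]
  have hIH : ∀ J ∈ M, (B.filter (· ⊆ J)).card = (J.card + 1) / 2 := by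
    intro J hJ
    obtain ⟨hJB, hJI⟩ := mem_filter.1 (mem_filter.1 hJ).1
    exact ih _ (hn ▸ card_lt_card hJI) hJB rfl
  have htwice : ∀ J ∈ M, 2 * ((J.card + 1) / 2) = J.card + 1 := fun J hJ =>
    Nat.two_mul_div_two_of_even (hB.1 J (mem_filter.1 (mem_filter.1 hJ).1).1).2.add_one
  have hsum := sum_card_maxElts_add_one hB hI
  rw [← sum_congr rfl htwice, ← mul_sum] at hsum
  rw [hsplit, card_insert_of_notMem (by simp), card_filter_ssubset_eq_sum hB, sum_congr rfl hIH]
  omega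

end Phi

theorem statement10_general (N : ℕ)
    (B : Finset (Finset (ZMod N))) (hB : B ∈ phiSet (cadj N))
    (I : Finset (ZMod N)) (hI : I ∈ B) :
    (B.filter (fun I' => I' ⊆ I)).card = (I.card + 1) / 2 :=
  card_filter_subset_of_mem_phiSet hB hI

/-- for `B ∈ phi` and `I ∈ B`, `|{I' ∈ B : I' ⊆ I}| = (|I|+1)/2`. -/
theorem statement10 (N : ℕ) [NeZero N] (hN : 3 ≤ N) (hodd : Odd N)
    (B : Finset (Finset (ZMod N))) (hB : B ∈ phiSet (cadj N))
    (I : Finset (ZMod N)) (hI : I ∈ B) :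
    (B.filter (fun I' => I' ⊆ I)).card = (I.card + 1) / 2 :=
  statement10_general N B hB I hI
end
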